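/- Let k ≥ 3. Then for all n ≥ 2, r_n^(k) = Σ_{j=1}^{k−1} r_{n−j}^(k) + d_n^(k), where by convention r_0^(k) = 1, r_1^(k) = 0 and r_j^(k) = 0 for j < 0. -/

import Mathlib

/-- A binary string (list of booleans, `false` = 0, `true` = 1) avoids `0^k`
and `1^k`, i.e. it contains neither `k` consecutive 0's nor `k` consecutive 1's. -/
def Avoids (k : ℕ) (s : List Bool) : Prop :=
  ¬ (List.replicate k false <:+: s) ∧ ¬ (List.replicate k true <:+: s)
/-- `rcount k n = r_n^(k)`: the number of binary strings of length `n` starting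
with 0, ending with 1 and avoiding `0^k` and `1^k` (the empty string counts,
so `rcount k 0 = 1`). -/
noncomputable def rcount (k n : ℕ) : ℕ :=
  Set.ncard {s : List Bool | s.length = n ∧ Avoids k s ∧
    s.head? ≠ some true ∧ s.getLast? ≠ some false}
/-- `r_n^(k)` extended to integer indices by the convention `r_j^(k) = 0` for `j < 0`. -/
noncomputable def rZ (k : ℕ) (n : ℤ) : ℤ :=
  if n < 0 then 0 else rcount k n.toNat
/-- The sequence `d_n^(k)`: `1` if `n ≡ 0 (mod k)`, `−1` if `n ≡ 1 (mod k)`,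
and `0` otherwise. -/
def dseq (k n : ℕ) : ℤ :=
  if n % k = 0 then 1 else if n % k = 1 then -1 else 0

/-!
Stripping the leading run (of length `1, …, k - 1`) off an avoiding string leaves an avoiding
string that starts with the other letter. With `b_n` the number of avoiding strings that start
and end with `1`, this gives `r_n = Σ_{a=1}^{k-1} b_{n-a} + [n = 0]` and
`b_n = Σ_{a=1}^{k-1} r_{n-a}`, so `e = r - b` satisfies `e_n + Σ_{a=1}^{k-1} e_{n-a} = [n = 0]`
and vanishes at negative indices. So does `d`: since `d_n = [k ∣ n] - [k ∣ n - 1]`, its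
sums over windows of length `k` telescope. Hence `b = r - d`, and substituting this into the
first recurrence gives the theorem.
-/

namespace List

variable {α : Type*}

theorem exists_replicate_append_of_head?_eq_some {c : α} :
    ∀ {s : List α}, s.head? = some c →
      ∃ a t, 1 ≤ a ∧ t.head? ≠ some c ∧ s = replicate a c ++ t
  | [], hs => by simp at hs
  | x :: s, hs => by
    obtain rfl : x = c := by simpa using hs
    by_cases hsc : s.head? = some x
    · obtain ⟨a, t, -, ht, rfl⟩ := exists_replicate_append_of_head?_eq_some hsc
      exact ⟨a + 1, t, by omega, ht, rfl⟩
    · exact ⟨1, s, le_rfl, hsc, rfl⟩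

theorem eq_of_replicate_append_eq {c : α} {t t' : List α} (ht : t.head? ≠ some c)
    (ht' : t'.head? ≠ some c) :
    ∀ {a a' : ℕ}, replicate a c ++ t = replicate a' c ++ t' → a = a'
  | 0, 0, _ => rfl
  | 0, _ + 1, h => absurd (by simpa [replicate_succ] using congrArg head? h) ht
  | _ + 1, 0, h => absurd (by simpa [replicate_succ] using (congrArg head? h).symm) ht'
  | _ + 1, _ + 1, h => by
    simp only [replicate_succ, cons_append, cons.injEq, true_and] at h
    rw [eq_of_replicate_append_eq ht ht' h]

theorem not_replicate_prefix_replicate_append {c c' : α} {b k : ℕ} {t : List α}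
    (hb : 1 ≤ b) (hbk : b < k) (ht : t.head? ≠ some c) :
    ¬ replicate k c' <+: replicate b c ++ t := by
  rintro ⟨u, hu⟩
  have h0 := congrArg (·[0]?) hu
  have hb := congrArg (·[b]?) hu
  simp only [getElem?_append_left (show 0 < (replicate k c').length by simp; omega),
    getElem?_append_left (show b < (replicate k c').length by simpa),
    getElem?_append_left (show 0 < (replicate b c).length by simpa),
    getElem?_append_right (show (replicate b c).length ≤ b by simp),
    getElem?_replicate, if_pos hbk, if_pos (show 0 < k by omega)] at h0 hb
  simp_all [head?_eq_getElem?]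

theorem IsInfix.of_replicate_append {c c' : α} {b k : ℕ} {t : List α} (hbk : b < k)
    (ht : t.head? ≠ some c) (h : replicate k c' <:+: replicate b c ++ t) :
    replicate k c' <:+: t := by
  induction b with
  | zero => simpa using h
  | succ b ih =>
    rw [replicate_succ, cons_append, infix_cons_iff, ← cons_append, ← replicate_succ] at h
    rcases h with h | h
    · exact absurd h (not_replicate_prefix_replicate_append le_add_self hbk ht)
    · exact ih (by omega) h

end List

theorem avoids_iff {k : ℕ} {s : List Bool} : Avoids k s ↔ ∀ c, ¬ List.replicate k c <:+: s := by
  simp [Avoids, Bool.forall_bool]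

theorem avoids_replicate_append_iff {k a : ℕ} {c : Bool} {t : List Bool}
    (ht : t.head? ≠ some c) : Avoids k (List.replicate a c ++ t) ↔ a < k ∧ Avoids k t := by
  simp only [avoids_iff]
  refine ⟨fun h => ⟨?_, fun c' hc' => h c' (hc'.trans (List.suffix_append _ _).isInfix)⟩,
    fun ⟨hak, h⟩ c' hc' => h c' (hc'.of_replicate_append hak ht)⟩
  by_contra! hka
  apply h c
  rw [← Nat.add_sub_cancel' hka, ← List.replicate_append_replicate, List.append_assoc]
  exact (List.prefix_append _ _).isInfix

/-- Indexed by an integer so that negative lengths count no strings, as in `rZ`. -/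
noncomputable def lengthCount {α : Type*} (P : List α → Prop) (m : ℤ) : ℤ :=
  {s : List α | (s.length : ℤ) = m ∧ P s}.ncard

section lengthCount

variable {α : Type*} {P P' : List α → Prop} {m : ℤ}

theorem lengthCount_of_neg (hm : m < 0) : lengthCount P m = 0 := by
  have : {s : List α | (s.length : ℤ) = m ∧ P s} = ∅ :=
    Set.eq_empty_of_forall_notMem fun s hs => by have := hs.1; omega
  simp [lengthCount, this]

theorem lengthCount_zero (h : P []) : lengthCount P 0 = 1 := by
  have : {s : List α | (s.length : ℤ) = 0 ∧ P s} = {[]} := by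
    ext s
    simp +contextual [h]
  rw [lengthCount, this, Set.ncard_singleton, Nat.cast_one]

theorem lengthCount_congr (h : ∀ s : List α, (s.length : ℤ) = m → (P s ↔ P' s)) :
    lengthCount P m = lengthCount P' m := by
  unfold lengthCount
  congr 3
  ext s
  exact and_congr_right (h s)

end lengthCount

theorem lengthCount_avoids_head?_eq_some (k : ℕ) (c : Bool) {Q Q' : List Bool → Prop}
    (hQ : ∀ a t, 1 ≤ a → (Q (List.replicate a c ++ t) ↔ Q' t)) (m : ℤ) :
    lengthCount (fun s => Avoids k s ∧ s.head? = some c ∧ Q s) m =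
      ∑ a ∈ Finset.Icc 1 (k - 1),
        lengthCount (fun t => Avoids k t ∧ t.head? ≠ some c ∧ Q' t) (m - a) := by
  set T : ℕ → Set (List Bool) := fun a =>
    {t | (t.length : ℤ) = m - a ∧ Avoids k t ∧ t.head? ≠ some c ∧ Q' t}
  have hdecomp : {s : List Bool | (s.length : ℤ) = m ∧ Avoids k s ∧ s.head? = some c ∧ Q s} =
      ⋃ a ∈ (Finset.Icc 1 (k - 1) : Set ℕ), (List.replicate a c ++ ·) '' T a := by
    ext s
    simp only [Set.mem_ofPred_eq, Set.mem_iUnion, Set.mem_image, Finset.coe_Icc, Set.mem_Icc,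
      exists_prop, T]
    constructor
    · rintro ⟨hlen, hA, hc, hQs⟩
      obtain ⟨a, t, ha, ht, rfl⟩ := List.exists_replicate_append_of_head?_eq_some hc
      rw [avoids_replicate_append_iff ht] at hA
      refine ⟨a, ⟨ha, by omega⟩, t, ⟨?_, hA.2, ht, (hQ a t ha).1 hQs⟩, rfl⟩
      simp only [List.length_append, List.length_replicate, Nat.cast_add] at hlen
      omega
    · rintro ⟨a, ⟨ha, hak⟩, t, ⟨hlen, hA, ht, hQt⟩, rfl⟩
      refine ⟨?_, (avoids_replicate_append_iff ht).2 ⟨by omega, hA⟩, ?_, (hQ a t ha).2 hQt⟩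
      · simp only [List.length_append, List.length_replicate, Nat.cast_add]
        omega
      · obtain ⟨a, rfl⟩ := Nat.exists_eq_add_of_le' ha
        simp [List.replicate_succ]
  have hfin (a : ℕ) : (T a).Finite :=
    (List.finite_length_eq Bool (m - a).toNat).subset fun t ht => by
      have := ht.1
      simp only [Set.mem_ofPred_eq]
      omega
  have hdisj : (Finset.Icc 1 (k - 1) : Set ℕ).PairwiseDisjoint
      fun a => (List.replicate a c ++ ·) '' T a := by
    intro a _ a' _ hne
    rw [Function.onFun, Set.disjoint_left]
    rintro _ ⟨t, ⟨-, -, ht, -⟩, rfl⟩ ⟨t', ⟨-, -, ht', -⟩, h⟩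
    exact hne (List.eq_of_replicate_append_eq ht ht' h.symm)
  rw [lengthCount, hdecomp, Set.Finite.ncard_biUnion (Finset.finite_toSet _)
    (fun a _ => (hfin a).image _) hdisj, finsum_mem_coe_finset, Nat.cast_sum]
  refine Finset.sum_congr rfl fun a _ => ?_
  rw [Set.ncard_image_of_injective _ (List.append_right_injective _)]
  rfl

theorem rZ_eq_lengthCount (k : ℕ) :
    rZ k = lengthCount fun s => Avoids k s ∧ s.head? ≠ some true ∧ s.getLast? ≠ some false := by
  funext m
  by_cases hm : m < 0
  · rw [rZ, if_pos hm, lengthCount_of_neg hm]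
  · rw [rZ, if_neg hm, rcount, lengthCount]
    congr 3
    ext s
    exact and_congr_left fun _ => by omega

noncomputable def bZ (k : ℕ) : ℤ → ℤ :=
  lengthCount fun s => Avoids k s ∧ s.head? = some true ∧ s.getLast? = some true

theorem bZ_eq_sum_rZ (k : ℕ) (m : ℤ) :
    bZ k m = ∑ a ∈ Finset.Icc 1 (k - 1), rZ k (m - a) := by
  rw [rZ_eq_lengthCount]
  refine lengthCount_avoids_head?_eq_some k true (fun a t ha => ?_) m
  rw [List.getLast?_append, List.getLast?_replicate, if_neg (by omega)]
  rcases t.getLast? with _ | _ | _ <;> simp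

theorem rZ_eq_sum_bZ {k : ℕ} (hk : 1 ≤ k) (m : ℤ) :
    rZ k m = ∑ a ∈ Finset.Icc 1 (k - 1), bZ k (m - a) + if m = 0 then 1 else 0 := by
  by_cases hm : m = 0
  · subst hm
    have hnil : Avoids k [] := avoids_iff.2 fun c h => by
      have := List.infix_nil.1 h
      simp only [List.replicate_eq_nil_iff] at this
      omega
    have hsum : ∑ a ∈ Finset.Icc 1 (k - 1), bZ k (0 - a) = 0 :=
      Finset.sum_eq_zero fun a ha => lengthCount_of_neg (by simp at ha; omega)
    rw [if_pos rfl, hsum, zero_add, rZ_eq_lengthCount, lengthCount_zero ⟨hnil, by simp, by simp⟩]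
  rw [if_neg hm, add_zero, rZ_eq_lengthCount,
    lengthCount_congr (P' := fun s => Avoids k s ∧ s.head? = some false ∧ s.getLast? ≠ some false),
    lengthCount_avoids_head?_eq_some k false (Q' := fun t => t.getLast? = some true)]
  · refine Finset.sum_congr rfl fun a _ => congrArg₂ _ (funext fun t => ?_) rfl
    rcases t with _ | ⟨_ | _, t⟩ <;> simp
  · intro a t ha
    rw [List.getLast?_append, List.getLast?_replicate, if_neg (by omega)]
    rcases t.getLast? with _ | _ | _ <;> simp
  · rintro (_ | ⟨_ | _, s⟩) hs
    · exact absurd hs.symm hm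
    all_goals simp

theorem eq_of_add_sum_eq {G : Type*} [AddCancelCommMonoid G] {E F : ℤ → G} (I : Finset ℕ)
    (hI : 0 ∉ I) (hneg : ∀ m < 0, E m = F m)
    (h : ∀ m, E m + ∑ a ∈ I, E (m - a) = F m + ∑ a ∈ I, F (m - a)) : E = F := by
  suffices hlt : ∀ n : ℕ, ∀ m : ℤ, m < n → E m = F m from
    funext fun m => hlt (m.toNat + 1) m (by omega)
  intro n
  induction n with
  | zero => exact hneg
  | succ n ih =>
    intro m hm
    rcases (show m < n ∨ m = n by omega) with hmn | rfl
    · exact ih m hmn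
    have hsum : ∑ a ∈ I, E (n - a) = ∑ a ∈ I, F (n - a) :=
      Finset.sum_congr rfl fun a ha => ih _ (by have := ne_of_mem_of_not_mem ha hI; omega)
    exact add_right_cancel (hsum ▸ h n)

noncomputable def dZ (k : ℕ) (m : ℤ) : ℤ :=
  if m < 0 then 0 else dseq k m.toNat

def multiplesIndicator (k : ℕ) (m : ℤ) : ℤ :=
  if 0 ≤ m ∧ (k : ℤ) ∣ m then 1 else 0

theorem dseq_succ {k : ℕ} (hk : 2 ≤ k) (n : ℕ) :
    dseq k (n + 1) = (if k ∣ n + 1 then 1 else 0) - if k ∣ n then 1 else 0 := by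
  have := Nat.mod_lt n (by omega : 0 < k)
  simp only [dseq, Nat.dvd_iff_mod_eq_zero, Nat.add_mod_eq_ite,
    Nat.one_mod_eq_one.2 (by omega : k ≠ 1)]
  split_ifs <;> first | contradiction | omega

theorem multiplesIndicator_natCast (k n : ℕ) :
    multiplesIndicator k n = if k ∣ n then 1 else 0 := by
  simp [multiplesIndicator, Int.natCast_dvd_natCast]

theorem dZ_eq_sub {k : ℕ} (hk : 2 ≤ k) (m : ℤ) :
    dZ k m = multiplesIndicator k m - multiplesIndicator k (m - 1) := by
  rcases lt_or_ge m 0 with hm | hm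
  · simp [dZ, multiplesIndicator, hm, hm.not_ge, show ¬ 1 ≤ m by omega]
  obtain ⟨n, rfl⟩ := Int.eq_ofNat_of_zero_le hm
  cases n with
  | zero => simp [dZ, multiplesIndicator, dseq]
  | succ n =>
    rw [show ((n + 1 : ℕ) : ℤ) - 1 = n by push_cast; ring, multiplesIndicator_natCast,
      multiplesIndicator_natCast, dZ, if_neg (by omega), Int.toNat_natCast, dseq_succ hk]

theorem dZ_add_sum {k : ℕ} (hk : 2 ≤ k) (m : ℤ) :
    dZ k m + ∑ a ∈ Finset.Icc 1 (k - 1), dZ k (m - a) = if m = 0 then 1 else 0 := by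
  have hwindow : dZ k m + ∑ a ∈ Finset.Icc 1 (k - 1), dZ k (m - a) =
      ∑ j ∈ Finset.range k, dZ k (m - j) := by
    rw [Finset.sum_range_eq_add_Ico _ (by omega), Nat.cast_zero, sub_zero,
      ← Finset.Icc_sub_one_right_eq_Ico_of_not_isMin (by simp; omega)]
  have htelescope : ∑ j ∈ Finset.range k, dZ k (m - j) =
      multiplesIndicator k m - multiplesIndicator k (m - k) := by
    simpa [dZ_eq_sub hk, sub_sub] using
      Finset.sum_range_sub' (fun j : ℕ => multiplesIndicator k (m - j)) k
  rw [hwindow, htelescope]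
  simp only [multiplesIndicator, dvd_sub_self_right]
  rcases eq_or_ne m 0 with rfl | hm0
  · simp
    omega
  rw [if_neg hm0, sub_eq_zero]
  refine if_congr (and_congr_left fun hdvd => ⟨fun hm => ?_, fun hm => by omega⟩) rfl rfl
  have := Int.le_of_dvd (lt_of_le_of_ne hm hm0.symm) hdvd
  omega

theorem rZ_sub_bZ {k : ℕ} (hk : 2 ≤ k) : rZ k - bZ k = dZ k := by
  refine eq_of_add_sum_eq (Finset.Icc 1 (k - 1)) (by simp) (fun m hm => ?_) fun m => ?_
  · simp [rZ, bZ, dZ, hm, lengthCount_of_neg]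
  · simp only [Pi.sub_apply, Finset.sum_sub_distrib, dZ_add_sum hk]
    rw [rZ_eq_sum_bZ (by omega), bZ_eq_sum_rZ]
    ring

/-- `r_n^(k) = Σ_{j=1}^{k−1} r_{n−j}^(k) + d_n^(k)` for `n ≥ 2`. -/
theorem rcount_recurrence_d (k : ℕ) (hk : 3 ≤ k) :
    ∀ n : ℕ, 2 ≤ n →
      rZ k n = ∑ j ∈ Finset.Icc 1 (k - 1), rZ k ((n : ℤ) - j) + dseq k n := by
  intro n hn
  have hn0 : (n : ℤ) ≠ 0 := by omega
  have hbZ (a : ℕ) : bZ k (n - a) = rZ k (n - a) - dZ k (n - a) := by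
    rw [← rZ_sub_bZ (by omega), Pi.sub_apply, sub_sub_cancel]
  have hdZ := dZ_add_sum (by omega : 2 ≤ k) n
  rw [if_neg hn0, show dZ k n = dseq k n by simp [dZ]] at hdZ
  rw [rZ_eq_sum_bZ (by omega), if_neg hn0, add_zero, Finset.sum_congr rfl fun a _ => hbZ a,
    Finset.sum_sub_distrib]
  linarith
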